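/- Let V be a module over the twisted N=1 Schrödinger-Neveu-Schwarz algebra and let v ∈ V satisfy G_{-1/2}v = Y_{-1/2}v = M_{-1/2}v = 0. Then Y_{-p} v = 0 and M_{-p} v = 0 for all p ∈ (1/2)ℤ with p > 0, and moreover ((1/2)L_{-1}G_{-1/2} + G_{-3/2})G_{-3/2} v = 0. -/

import Mathlib

noncomputable section

/-- Basis of the twisted N=1 Schrodinger-Neveu-Schwarz algebra.
`L n` is L_n, `G k` is G_{k+1/2}, `Y p` is Y_{p/2}, `M p` is M_{p/2}, `C` is the central element. -/
inductive B : Type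
  | L : ℤ → B
  | G : ℤ → B
  | Y : ℤ → B
  | M : ℤ → B
  | C : B
deriving DecidableEq

/-- The underlying vector space of tsns. -/
abbrev V := B →₀ ℂ

/-- Basis vectors. -/
def e (x : B) : V := Finsupp.single x 1

/-- Parity of a basis element. -/
def isOdd : B → Bool
  | .G _ => true
  | .Y p => if p % 2 = 0 then false else true
  | .M p => if p % 2 = 0 then false else true
  | _ => false

/-- The Koszul sign (-1)^{|x||y|}. -/
def sgn (x y : B) : ℂ := if isOdd x && isOdd y then -1 else 1

/-- The super-bracket on basis elements of tsns. -/
def bb : B → B → V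
  | .L n, .L m => ((m : ℂ) - n) • e (.L (n+m)) +
      (if m = -n then (((n:ℂ)^3 - (n:ℂ))/12) • e B.C else 0)
  | .L n, .G k => ((k : ℂ) + 1/2 - (n:ℂ)/2) • e (.G (k+n))
  | .G k, .L n => (-((k : ℂ) + 1/2 - (n:ℂ)/2)) • e (.G (k+n))
  | .G k, .G l => (2:ℂ) • e (.L (k+l+1)) +
      (if l = -k-1 then ((1 - 4*((k:ℂ)+1/2)^2)/12) • e B.C else 0)
  | .L n, .Y p => (if p % 2 = 0 then (p:ℂ)/2 - (n:ℂ)/2 else (p:ℂ)/2) • e (.Y (p + 2*n))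
  | .Y p, .L n => (-(if p % 2 = 0 then (p:ℂ)/2 - (n:ℂ)/2 else (p:ℂ)/2)) • e (.Y (p + 2*n))
  | .L n, .M p => (if p % 2 = 0 then (p:ℂ)/2 else (p:ℂ)/2 + (n:ℂ)/2) • e (.M (p + 2*n))
  | .M p, .L n => (-(if p % 2 = 0 then (p:ℂ)/2 else (p:ℂ)/2 + (n:ℂ)/2)) • e (.M (p + 2*n))
  | .G k, .Y p => (if p % 2 = 0 then ((p:ℂ)/2 - ((k:ℂ)+1/2))/2 else 2) • e (.Y (p + 2*k + 1))
  | .Y p, .G k => (if p % 2 = 0 then -(((p:ℂ)/2 - ((k:ℂ)+1/2))/2) else 2) • e (.Y (p + 2*k + 1))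
  | .G k, .M p => (if p % 2 = 0 then (p:ℂ)/4 else 2) • e (.M (p + 2*k + 1))
  | .M p, .G k => (if p % 2 = 0 then -((p:ℂ)/4) else 2) • e (.M (p + 2*k + 1))
  | .Y p, .Y q => (if p % 2 = 0 then (if q % 2 = 0 then ((q:ℂ) - p)/4 else (q:ℂ)/4)
      else (if q % 2 = 0 then -((p:ℂ)/4) else 2)) • e (.M (p + q))
  | _, _ => 0

/-- Bilinear extension of the bracket to all of tsns. -/
def br (f g : V) : V := f.sum fun x a => g.sum fun y b => (a * b) • bb x y

/-- Linear extension of an assignment of operators to basis elements. -/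
def ext {W : Type} [AddCommGroup W] [Module ℂ W] (ρ : B → Module.End ℂ W) (f : V) :
    Module.End ℂ W := f.sum fun x a => a • ρ x

/-- A module (representation) over the twisted N=1 Schrodinger-Neveu-Schwarz algebra. -/
structure TsnsRep (W : Type) [AddCommGroup W] [Module ℂ W] where
  ρ : B → Module.End ℂ W
  compat : ∀ x y : B, ext ρ (bb x y) = ρ x * ρ y - sgn x y • (ρ y * ρ x)

/-- Simplicity (irreducibility) of a tsns-module. -/
def TsnsSimple {W : Type} [AddCommGroup W] [Module ℂ W] (r : TsnsRep W) : Prop :=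
  (∃ w : W, w ≠ 0) ∧
    ∀ U : Submodule ℂ W, (∀ x : B, ∀ u ∈ U, r.ρ x u ∈ U) → U = ⊥ ∨ U = ⊤

/-! Every vector killed by `G_{-1/2}` is also killed by `L_{-1} = G_{-1/2}²`, and lowering with
`G_{-1/2}` moves `Y_{-p}` to `Y_{-p-1/2}` and `M_{-p}` to `M_{-p-1/2}` with a nonzero structure
constant (the only vanishing one, `[G_{-1/2}, M_0]`, is never reached), so the vanishing
propagates from `p = 1/2` to all `p > 0`. For the second claim the
commutation relations rewrite `G_{-1/2}G_{-3/2}v = 2L_{-2}v`, `G_{-3/2}²v = L_{-3}v` and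
`L_{-1}L_{-2}v = -L_{-3}v`, which cancel. -/

lemma bb_G_G_of_ne {k l : ℤ} (h : l ≠ -k - 1) :
    bb (.G k) (.G l) = Finsupp.single (.L (k + l + 1)) 2 := by
  simp [bb, e, h]

lemma bb_L_L_of_ne {n m : ℤ} (h : m ≠ -n) :
    bb (.L n) (.L m) = Finsupp.single (.L (n + m)) ((m : ℂ) - n) := by
  simp [bb, e, h]

lemma bb_G_neg_one_Y (p : ℤ) : ∃ c : ℂ, c ≠ 0 ∧
    bb (.G (-1)) (.Y p) = Finsupp.single (.Y (p - 1)) c := by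
  refine ⟨if p % 2 = 0 then ((p : ℂ) + 1) / 4 else 2, ?_, ?_⟩
  · split_ifs with hp
    · have : (p : ℂ) + 1 ≠ 0 := by exact_mod_cast (show p + 1 ≠ 0 by omega)
      simpa using this
    · norm_num
  · simp only [bb, e, Finsupp.smul_single, smul_eq_mul, mul_one]
    split_ifs <;> ring_nf

lemma bb_G_neg_one_M {p : ℤ} (hp : p ≠ 0) : ∃ c : ℂ, c ≠ 0 ∧
    bb (.G (-1)) (.M p) = Finsupp.single (.M (p - 1)) c := by
  refine ⟨if p % 2 = 0 then (p : ℂ) / 4 else 2, ?_, ?_⟩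
  · split_ifs
    · simpa using hp
    · norm_num
  · simp only [bb, e, Finsupp.smul_single, smul_eq_mul, mul_one]
    split_ifs <;> ring_nf

namespace TsnsRep

variable {W : Type} [AddCommGroup W] [Module ℂ W] (r : TsnsRep W)

lemma smul_apply_of_bb_eq_single {x y z : B} {c : ℂ} (h : bb x y = Finsupp.single z c) (v : W) :
    c • r.ρ z v = r.ρ x (r.ρ y v) - sgn x y • r.ρ y (r.ρ x v) := by
  have h2 := LinearMap.congr_fun (r.compat x y) v
  rwa [ext, h, Finsupp.sum_single_index (zero_smul ℂ (r.ρ z))] at h2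

lemma apply_eq_zero_of_bb_eq_single {x y z : B} {c : ℂ} (h : bb x y = Finsupp.single z c)
    (hc : c ≠ 0) {v : W} (hx : r.ρ x v = 0) (hy : r.ρ y v = 0) : r.ρ z v = 0 := by
  have h2 := r.smul_apply_of_bb_eq_single h v
  rw [hx, hy, map_zero, map_zero, smul_zero, sub_zero] at h2
  exact (smul_eq_zero.mp h2).resolve_left hc

lemma G_anticomm_apply {k l : ℤ} (h : l ≠ -k - 1) (v : W) :
    r.ρ (.G k) (r.ρ (.G l) v) + r.ρ (.G l) (r.ρ (.G k) v) = (2 : ℂ) • r.ρ (.L (k + l + 1)) v := by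
  rw [r.smul_apply_of_bb_eq_single (bb_G_G_of_ne h)]
  simp [sgn, isOdd]

lemma L_comm_apply {n m : ℤ} (h : m ≠ -n) (v : W) :
    r.ρ (.L n) (r.ρ (.L m) v) - r.ρ (.L m) (r.ρ (.L n) v) = ((m : ℂ) - n) • r.ρ (.L (n + m)) v := by
  rw [r.smul_apply_of_bb_eq_single (bb_L_L_of_ne h)]
  simp [sgn, isOdd]

variable {r}

lemma Y_M_apply_eq_zero_of_G_Y_M {v : W} (hG : r.ρ (.G (-1)) v = 0)
    (hY : r.ρ (.Y (-1)) v = 0) (hM : r.ρ (.M (-1)) v = 0) {p : ℤ} (hp : 0 < p) :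
    r.ρ (.Y (-p)) v = 0 ∧ r.ρ (.M (-p)) v = 0 := by
  replace hp : 1 ≤ p := hp
  induction p, hp using Int.leInduction with
  | base => exact ⟨hY, hM⟩
  | succ q hq ih =>
    obtain ⟨c, hc, hY'⟩ := bb_G_neg_one_Y (-q)
    obtain ⟨d, hd, hM'⟩ := bb_G_neg_one_M (show -q ≠ 0 by omega)
    rw [show -(q + 1) = -q - 1 by ring]
    exact ⟨r.apply_eq_zero_of_bb_eq_single hY' hc hG ih.1,
      r.apply_eq_zero_of_bb_eq_single hM' hd hG ih.2⟩

lemma half_L_G_add_G_G_apply_eq_zero {v : W} (hG : r.ρ (.G (-1)) v = 0) :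
    ((1 : ℂ) / 2) • r.ρ (.L (-1)) (r.ρ (.G (-1)) (r.ρ (.G (-2)) v))
      + r.ρ (.G (-2)) (r.ρ (.G (-2)) v) = 0 := by
  have hL : r.ρ (.L (-1)) v = 0 := by
    have h := r.G_anticomm_apply (k := -1) (l := -1) (by norm_num) v
    rw [hG, map_zero, add_zero, eq_comm, smul_eq_zero] at h
    exact h.resolve_left two_ne_zero
  have hGG : r.ρ (.G (-1)) (r.ρ (.G (-2)) v) = (2 : ℂ) • r.ρ (.L (-2)) v := by
    simpa [hG] using r.G_anticomm_apply (k := -1) (l := -2) (by norm_num) v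
  have hG2 : (2 : ℂ) • r.ρ (.G (-2)) (r.ρ (.G (-2)) v) = (2 : ℂ) • r.ρ (.L (-3)) v := by
    rw [two_smul]
    exact r.G_anticomm_apply (k := -2) (l := -2) (by norm_num) v
  have hLL : r.ρ (.L (-1)) (r.ρ (.L (-2)) v) = -r.ρ (.L (-3)) v := by
    have h := r.L_comm_apply (n := -1) (m := -2) (by norm_num) v
    norm_num [hL] at h
    exact h
  rw [hGG, map_smul, hLL, smul_right_injective W two_ne_zero hG2]
  module

end TsnsRep

/-- if G_{-1/2}v = Y_{-1/2}v = M_{-1/2}v = 0 then Y_{-p}v = M_{-p}v = 0 for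
all p ∈ (1/2)ℤ, p > 0, and ((1/2)L_{-1}G_{-1/2} + G_{-3/2})G_{-3/2}v = 0. -/
theorem negative_YM_kill {W : Type} [AddCommGroup W] [Module ℂ W] (r : TsnsRep W)
    (v : W) (hG : r.ρ (.G (-1)) v = 0) (hY : r.ρ (.Y (-1)) v = 0)
    (hM : r.ρ (.M (-1)) v = 0) :
    (∀ p : ℤ, 0 < p → r.ρ (.Y (-p)) v = 0 ∧ r.ρ (.M (-p)) v = 0) ∧
    ((1:ℂ)/2) • r.ρ (.L (-1)) (r.ρ (.G (-1)) (r.ρ (.G (-2)) v))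
      + r.ρ (.G (-2)) (r.ρ (.G (-2)) v) = 0 :=
  ⟨fun _ => TsnsRep.Y_M_apply_eq_zero_of_G_Y_M hG hY hM,
    TsnsRep.half_L_G_add_G_G_apply_eq_zero hG⟩
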